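/- arXiv:2305.16475 — 3 statements merged into one kernel-verified Lean document; each statement's English description precedes it below -/
import Mathlib

section
/- There exists a universal constant c > 0 with the following property. For any B, L ≥ 1 and 0 < ε ≤ 1 such that L²B²/(128ε²) ≥ 20, there exist dimensions d and n (one may take d = ⌊L²B²/(128ε²)⌋ and n exponentially large in d) and an L-Lipschitz function f: ℝⁿ → ℝ (with respect to the Euclidean norm) such that the function class F = {x ↦ f(Wx) : W ∈ ℝ^{n×d}, ‖W‖_F ≤ B} shatters at least exp(c·L²B²/ε²) points from the Euclidean unit ball {x ∈ ℝ^d : ‖x‖ ≤ 1} with margin ε. -/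
noncomputable section

open scoped BigOperators

/-- Euclidean norm of a vector in `ℝ^n`. -/
def euclNorm {n : ℕ} (v : Fin n → ℝ) : ℝ := Real.sqrt (∑ i, (v i) ^ 2)

/-- Frobenius norm of a matrix. -/
def frobNorm {n d : ℕ} (M : Matrix (Fin n) (Fin d) ℝ) : ℝ :=
  Real.sqrt (∑ i, ∑ j, (M i j) ^ 2)

/-- A class `F` of real-valued functions shatters the points `x 0, …, x (m-1)` with margin `ε`. -/
def shatters {X : Type*} {m : ℕ} (F : Set (X → ℝ)) (x : Fin m → X) (ε : ℝ) : Prop :=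
  ∃ s : ℝ, ∀ y : Fin m → Bool, ∃ f ∈ F, ∀ i : Fin m,
    (y i = false → f (x i) ≤ s - ε) ∧ (y i = true → s + ε ≤ f (x i))


/-!
Gilbert–Varshamov gives `exp (2k)` words of `{0,1}^d`, `d = 8k`, at pairwise Hamming distance at
least `k`; as `±1/√d` vectors they are unit vectors at pairwise squared distance at least `1/2`.
For a labelling `y` the matrix `W_y`, of Frobenius norm `B`, copies `ℝ^d` scaled by `B/√d` into a
block of coordinates of `ℝ^n` reserved for `y`. Two images `W_y x_i ≠ W_{y'} x_{i'}` are therefore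
at distance at least `B/√(2d) ≥ 2ε/L`, so the function equal to `ε` on the images of the points
labelled `1` and to `-ε` on the others is `L`-Lipschitz there, and its McShane extension shatters.
-/
open Finset Matrix
open scoped NNReal

lemma euclNorm_sq {n : ℕ} (v : Fin n → ℝ) : euclNorm v ^ 2 = ∑ i, v i ^ 2 :=
  Real.sq_sqrt (by positivity)

lemma dist_toLp_eq_euclNorm {n : ℕ} (u v : Fin n → ℝ) :
    dist (WithLp.toLp 2 u) (WithLp.toLp 2 v) = euclNorm (u - v) := by
  simp [EuclideanSpace.dist_eq, euclNorm, Real.dist_eq, sq_abs]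

lemma exists_lipschitzWith_eqOn_of_separated {X : Type*} [PseudoMetricSpace X] {s t : Set X}
    {K : ℝ≥0} {ε : ℝ} (hε : 0 < ε) (hst : ∀ p ∈ s, ∀ q ∈ t, 2 * ε ≤ K * dist p q) :
    ∃ f : X → ℝ, LipschitzWith K f ∧ Set.EqOn f (fun _ => ε) s ∧ Set.EqOn f (fun _ => -ε) t := by
  classical
  have hts : ∀ q ∈ t, q ∉ s := fun q hq hs => by
    have := hst q hs q hq
    rw [dist_self, mul_zero] at this
    linarith
  let g : X → ℝ := fun p => if p ∈ s then ε else -ε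
  have hdist : dist ε (-ε) = 2 * ε := by
    rw [Real.dist_eq, sub_neg_eq_add, ← two_mul, abs_of_pos (by positivity)]
  have hg : LipschitzOnWith K g (s ∪ t) := by
    refine LipschitzOnWith.of_dist_le_mul fun p hp q hq => ?_
    rcases hp with hp | hp <;> rcases hq with hq | hq
    · simpa [g, hp, hq] using by positivity
    · simpa [g, hp, hts q hq, hdist] using hst p hp q hq
    · simpa [g, hq, hts p hp, dist_comm, hdist] using hst q hq p hp
    · simpa [g, hts p hp, hts q hq] using by positivity
  obtain ⟨f, hf, hfg⟩ := hg.extend_real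
  refine ⟨f, hf, fun p hp => ?_, fun q hq => ?_⟩
  · rw [← hfg (Or.inl hp)]; simp [g, hp]
  · rw [← hfg (Or.inr hq)]; simp [g, hts q hq]

lemma exists_lipschitz_eq_sign {n : ℕ} {I : Type*} (z : I → Fin n → ℝ) (label : I → Bool)
    {L ε : ℝ} (hL : 0 ≤ L) (hε : 0 < ε)
    (hz : ∀ a b, label a = true → label b = false → 2 * ε ≤ L * euclNorm (z a - z b)) :
    ∃ f : (Fin n → ℝ) → ℝ, (∀ u v, |f u - f v| ≤ L * euclNorm (u - v)) ∧
      ∀ a, f (z a) = if label a then ε else -ε := by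
  let toE : (Fin n → ℝ) → EuclideanSpace ℝ (Fin n) := WithLp.toLp 2
  obtain ⟨f, hf, hfs, hft⟩ := exists_lipschitzWith_eqOn_of_separated (K := L.toNNReal) hε
    (s := toE '' (z '' {a | label a})) (t := toE '' (z '' {a | label a = false}))
    (by
      rintro _ ⟨_, ⟨a, ha, rfl⟩, rfl⟩ _ ⟨_, ⟨b, hb, rfl⟩, rfl⟩
      rw [Real.coe_toNNReal L hL, dist_toLp_eq_euclNorm]
      exact hz a b ha hb)
  refine ⟨f ∘ toE, fun u v => ?_, fun a => ?_⟩
  · have := hf.dist_le_mul (toE u) (toE v)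
    rwa [Real.coe_toNNReal L hL, Real.dist_eq, dist_toLp_eq_euclNorm] at this
  · cases ha : label a
    · simpa using hft ⟨z a, ⟨a, ha, rfl⟩, rfl⟩
    · simpa using hfs ⟨z a, ⟨a, ha, rfl⟩, rfl⟩

section BlockMatrix

variable {Y : Type*} [DecidableEq Y] {d n : ℕ} (ι : Y × Fin d ≃ Fin n) (r : ℝ)

def blockMatrix (y : Y) : Matrix (Fin n) (Fin d) ℝ :=
  Matrix.of fun a j => if ι.symm a = (y, j) then r else 0

lemma blockMatrix_mulVec_apply (y : Y) (v : Fin d → ℝ) (a : Fin n) :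
    (blockMatrix ι r y *ᵥ v) a = if (ι.symm a).1 = y then r * v (ι.symm a).2 else 0 := by
  obtain ⟨⟨z, j⟩, rfl⟩ := ι.surjective a
  simp [blockMatrix, Matrix.mulVec, dotProduct, Prod.ext_iff, ite_and]

lemma frobNorm_blockMatrix [Fintype Y] (y : Y) : frobNorm (blockMatrix ι r y) = √(d * r ^ 2) := by
  rw [frobNorm, Finset.sum_comm]
  congr 1
  simp only [← ι.sum_comp, blockMatrix, of_apply, Equiv.symm_apply_apply, Fintype.sum_prod_type]
  simp [apply_ite (· ^ 2), ite_and]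

lemma euclNorm_blockMatrix_mulVec_sub_sq [Fintype Y] (y y' : Y) (u u' : Fin d → ℝ) :
    euclNorm (blockMatrix ι r y *ᵥ u - blockMatrix ι r y' *ᵥ u') ^ 2 =
      r ^ 2 * if y = y' then euclNorm (u - u') ^ 2 else euclNorm u ^ 2 + euclNorm u' ^ 2 := by
  simp only [euclNorm_sq, Pi.sub_apply, blockMatrix_mulVec_apply]
  rw [← ι.sum_comp, Fintype.sum_prod_type]
  simp only [Equiv.symm_apply_apply]
  split_ifs with h
  · subst h
    simp [ite_sub_ite, Finset.mul_sum, ← mul_sub, mul_pow]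
  · simp [sub_sq, ite_pow, Ne.symm h, Finset.sum_add_distrib, Finset.mul_sum, mul_pow, mul_add]

end BlockMatrix

def signVector {d : ℕ} (a : Fin d → Bool) : Fin d → ℝ := fun j => (if a j then 1 else -1) / √d

lemma euclNorm_signVector {d : ℕ} (hd : 0 < d) (a : Fin d → Bool) :
    euclNorm (signVector a) = 1 := by
  have hsq : (√(d : ℝ)) ^ 2 = d := Real.sq_sqrt d.cast_nonneg
  have : ∑ j, signVector a j ^ 2 = 1 := by
    simp [signVector, div_pow, hsq, apply_ite (· ^ 2), hd.ne']
  rw [euclNorm, this, Real.sqrt_one]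

lemma euclNorm_signVector_sub_sq {d : ℕ} (a b : Fin d → Bool) :
    euclNorm (signVector a - signVector b) ^ 2 = 4 * hammingDist a b / d := by
  have hsq : (√(d : ℝ)) ^ 2 = d := Real.sq_sqrt d.cast_nonneg
  have hterm : ∀ j,
      (signVector a j - signVector b j) ^ 2 = if a j ≠ b j then (4 : ℝ) / d else 0 := by
    intro j
    simp only [signVector]
    rw [← sub_div, div_pow, hsq]
    cases a j <;> cases b j <;> norm_num
  simp only [euclNorm_sq, Pi.sub_apply, hterm, Finset.sum_ite, Finset.sum_const_zero,
    Finset.sum_const, nsmul_eq_mul, hammingDist, add_zero]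
  ring

lemma half_le_euclNorm_signVector_sub_sq {d : ℕ} (hd : 0 < d) {a b : Fin d → Bool}
    (hab : d ≤ 8 * hammingDist a b) : 1 / 2 ≤ euclNorm (signVector a - signVector b) ^ 2 := by
  rw [euclNorm_signVector_sub_sq, le_div_iff₀ (by positivity)]
  have : (d : ℝ) ≤ 8 * hammingDist a b := by exact_mod_cast hab
  linarith

theorem shatters_of_separated {m d : ℕ} (hd : 0 < d) (x : Fin m → Fin d → ℝ)
    {δ B L ε : ℝ} (hB : 0 ≤ B) (hL : 0 ≤ L) (hε : 0 < ε) (hx : ∀ i, euclNorm (x i) = 1)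
    (hsep : ∀ i i', i ≠ i' → δ ≤ euclNorm (x i - x i') ^ 2) (hδ : δ ≤ 2)
    (hmargin : 4 * ε ^ 2 * d ≤ L ^ 2 * B ^ 2 * δ) :
    ∃ (n : ℕ) (f : (Fin n → ℝ) → ℝ), (∀ u v, |f u - f v| ≤ L * euclNorm (u - v)) ∧
      shatters {g | ∃ W : Matrix (Fin n) (Fin d) ℝ,
        frobNorm W ≤ B ∧ g = fun v => f (W *ᵥ v)} x ε := by
  let ι := Fintype.equivFin ((Fin m → Bool) × Fin d)
  have hdR : (0 : ℝ) < d := by exact_mod_cast hd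
  let r := B / √d
  have hr : r ^ 2 * d = B ^ 2 := by
    rw [div_pow, Real.sq_sqrt hdR.le, div_mul_cancel₀ _ hdR.ne']
  have hsepW : ∀ (y y' : Fin m → Bool) (i i' : Fin m), y i = true → y' i' = false →
      2 * ε ≤ L * euclNorm (blockMatrix ι r y *ᵥ x i - blockMatrix ι r y' *ᵥ x i') := by
    intro y y' i i' hyi hyi'
    have hδ' : δ ≤ if y = y' then euclNorm (x i - x i') ^ 2
        else euclNorm (x i) ^ 2 + euclNorm (x i') ^ 2 := by
      split_ifs with h
      · subst h
        exact hsep i i' (by rintro rfl; simp_all)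
      · simp [hx]; linarith
    have h := euclNorm_blockMatrix_mulVec_sub_sq ι r y y' (x i) (x i')
    refine (pow_le_pow_iff_left₀ (by linarith) (mul_nonneg hL (Real.sqrt_nonneg _))
      two_ne_zero).mp ?_
    calc (2 * ε) ^ 2 = 4 * ε ^ 2 * d / d := by field_simp; ring
      _ ≤ L ^ 2 * B ^ 2 * δ / d := by gcongr
      _ = L ^ 2 * (r ^ 2 * δ) := by rw [← hr]; field_simp
      _ ≤ (L * euclNorm (blockMatrix ι r y *ᵥ x i - blockMatrix ι r y' *ᵥ x i')) ^ 2 := by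
        rw [mul_pow, h]; gcongr
  obtain ⟨f, hf, hfz⟩ := exists_lipschitz_eq_sign
    (fun p : (Fin m → Bool) × Fin m => blockMatrix ι r p.1 *ᵥ x p.2) (fun p => p.1 p.2) hL hε
    (fun p q => hsepW p.1 q.1 p.2 q.2)
  refine ⟨_, f, hf, 0, fun y => ⟨_, ⟨blockMatrix ι r y, ?_, rfl⟩, fun i => ?_⟩⟩
  · rw [frobNorm_blockMatrix, mul_comm, hr, Real.sqrt_sq hB]
  · have := hfz (y, i)
    cases h : y i <;> simp_all

section Codes

variable {ι : Type*} [Fintype ι] [DecidableEq ι]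

lemma card_hammingDist_lt_le (a : ι → Bool) (k : ℕ) :
    #{v | hammingDist v a < k} ≤ ∑ j ∈ range k, (Fintype.card ι).choose j := by
  calc #{v | hammingDist v a < k}
      ≤ #((range k).biUnion fun j => powersetCard j (univ : Finset ι)) := by
        refine card_le_card_of_injOn (fun v => ({i | v i ≠ a i} : Finset ι)) (fun v hv => ?_)
          (fun v _ w _ hvw => ?_)
        · simpa [mem_biUnion, mem_powersetCard, hammingDist] using hv
        · funext i
          have := congrArg (i ∈ ·) hvw
          simp only [mem_filter, mem_univ, true_and, eq_iff_iff] at this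
          cases hv : v i <;> cases hw : w i <;> cases ha : a i <;> simp_all
    _ ≤ ∑ j ∈ range k, #(powersetCard j (univ : Finset ι)) := card_biUnion_le
    _ = ∑ j ∈ range k, (Fintype.card ι).choose j := by simp [card_powersetCard]

theorem exists_gilbertVarshamov_code {k : ℕ} (hk : 0 < k) :
    ∃ C : Finset (ι → Bool), (∀ a ∈ C, ∀ b ∈ C, a ≠ b → k ≤ hammingDist a b) ∧
      2 ^ Fintype.card ι ≤ #C * ∑ j ∈ range k, (Fintype.card ι).choose j := by
  let IsCode : Finset (ι → Bool) → Prop := fun C => ∀ a ∈ C, ∀ b ∈ C, a ≠ b → k ≤ hammingDist a b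
  obtain ⟨C, hC, hmax⟩ := exists_max_image {C ∈ univ.powerset | IsCode C} card
    ⟨∅, by simp [IsCode]⟩
  have hcode : IsCode C := (mem_filter.mp hC).2
  -- a maximal code is a covering: a word far from every codeword could be added to it
  have hcover : ∀ v, ∃ a ∈ C, hammingDist v a < k := by
    by_contra! hfar
    obtain ⟨v, hv⟩ := hfar
    have hvC : v ∉ C := fun h => by simpa [hk.ne'] using hv v h
    have hins : IsCode (insert v C) := by
      intro a ha b hb hab
      rcases mem_insert.mp ha with rfl | ha' <;> rcases mem_insert.mp hb with rfl | hb'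
      · exact absurd rfl hab
      · exact hv b hb'
      · exact hammingDist_comm a b ▸ hv a ha'
      · exact hcode a ha' b hb' hab
    have := hmax _ (mem_filter.mpr ⟨mem_powerset.mpr (subset_univ _), hins⟩)
    rw [card_insert_of_notMem hvC] at this
    omega
  refine ⟨C, hcode, ?_⟩
  calc 2 ^ Fintype.card ι = #(univ : Finset (ι → Bool)) := by simp
    _ ≤ #(C.biUnion fun a => {v | hammingDist v a < k}) := card_le_card fun v _ => by
        obtain ⟨a, ha, hva⟩ := hcover v
        exact mem_biUnion.mpr ⟨a, ha, by simpa using hva⟩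
    _ ≤ ∑ a ∈ C, #{v | hammingDist v a < k} := card_biUnion_le
    _ ≤ ∑ _a ∈ C, ∑ j ∈ range k, (Fintype.card ι).choose j :=
        sum_le_sum fun a _ => card_hammingDist_lt_le a k
    _ = #C * ∑ j ∈ range k, (Fintype.card ι).choose j := by rw [sum_const, smul_eq_mul]

end Codes

lemma sum_range_choose_mul_pow_le {a : ℕ} (ha : 1 ≤ a) (d k : ℕ) :
    (∑ j ∈ range k, d.choose j) * a ^ (d - k) ≤ (a + 1) ^ d := by
  rw [add_comm a 1, add_pow, sum_mul]
  simp only [one_pow, one_mul]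
  calc ∑ j ∈ range k, d.choose j * a ^ (d - k)
      ≤ ∑ j ∈ range k, a ^ (d - j) * d.choose j := sum_le_sum fun j hj => by
        rw [mul_comm]
        exact Nat.mul_le_mul_right _ (Nat.pow_le_pow_right ha (by have := mem_range.mp hj; omega))
    _ ≤ ∑ j ∈ range (d + 1), a ^ (d - j) * d.choose j := sum_le_sum_of_ne_zero fun j _ hj => by
        have : d.choose j ≠ 0 := right_ne_zero_of_mul hj
        rw [mem_range, Nat.lt_succ_iff]
        exact (Nat.choose_ne_zero_iff).mp this

lemma exists_code_exp_le_card {k : ℕ} (hk : 0 < k) :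
    ∃ C : Finset (Fin (8 * k) → Bool), (∀ a ∈ C, ∀ b ∈ C, a ≠ b → k ≤ hammingDist a b) ∧
      Real.exp (2 * k) ≤ #C := by
  obtain ⟨C, hcode, hcard⟩ := exists_gilbertVarshamov_code (ι := Fin (8 * k)) hk
  refine ⟨C, hcode, ?_⟩
  rw [Fintype.card_fin] at hcard
  have hnat : 2 ^ (8 * k) * 7 ^ (7 * k) ≤ #C * 8 ^ (8 * k) := by
    have htail := sum_range_choose_mul_pow_le (a := 7) (by norm_num) (8 * k) k
    rw [show 8 * k - k = 7 * k by omega] at htail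
    calc 2 ^ (8 * k) * 7 ^ (7 * k)
        ≤ #C * (∑ j ∈ range k, (8 * k).choose j) * 7 ^ (7 * k) := by gcongr
      _ ≤ #C * 8 ^ (8 * k) := by rw [mul_assoc]; gcongr
  have hexp2 : Real.exp 2 ≤ 7 ^ 7 / 2 ^ 16 := by
    have := Real.exp_one_lt_d9
    rw [show (2 : ℝ) = 1 + 1 by norm_num, Real.exp_add]
    nlinarith [Real.exp_pos 1]
  calc Real.exp (2 * k) = Real.exp 2 ^ k := by rw [← Real.exp_nat_mul, mul_comm]
    _ ≤ (7 ^ 7 / 2 ^ 16) ^ k := by gcongr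
    _ = 2 ^ (8 * k) * 7 ^ (7 * k) / 8 ^ (8 * k) := by
        rw [pow_mul, pow_mul, pow_mul, ← mul_pow, ← div_pow]; norm_num
    _ ≤ #C := by
        rw [div_le_iff₀ (by positivity)]
        exact_mod_cast hnat

lemma exists_nat_code_parameters {T : ℝ} (hT : 2560 ≤ T) :
    ∃ k : ℕ, 0 < k ∧ 1024 * k ≤ T ∧ T / 1000 ≤ 2 * k := by
  refine ⟨⌊T / 1024⌋₊, Nat.floor_pos.mpr (by linarith), ?_, ?_⟩
  · linarith [Nat.floor_le (a := T / 1024) (by positivity)]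
  · linarith [Nat.lt_floor_add_one (T / 1024)]

/-- Theorem 1 (lower bound, zero initialization): for suitable `B, L, ε` there exist
dimensions `d, n` and an `L`-Lipschitz `f : ℝ^n → ℝ` such that
`{x ↦ f(Wx) : ‖W‖_F ≤ B}` shatters at least `exp(c L² B² / ε²)` points of the
Euclidean unit ball of `ℝ^d` with margin `ε`. -/
theorem statement0 :
    ∃ c : ℝ, 0 < c ∧
      ∀ B L ε : ℝ, 1 ≤ B → 1 ≤ L → 0 < ε → ε ≤ 1 →
        20 ≤ L ^ 2 * B ^ 2 / (128 * ε ^ 2) →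
        ∃ (d n mpts : ℕ) (f : (Fin n → ℝ) → ℝ),
          (∀ u v : Fin n → ℝ, |f u - f v| ≤ L * euclNorm (u - v)) ∧
          Real.exp (c * L ^ 2 * B ^ 2 / ε ^ 2) ≤ (mpts : ℝ) ∧
          ∃ x : Fin mpts → (Fin d → ℝ),
            (∀ i, euclNorm (x i) ≤ 1) ∧
            shatters {g | ∃ W : Matrix (Fin n) (Fin d) ℝ,
                frobNorm W ≤ B ∧ g = fun v => f (W.mulVec v)} x ε := by
  refine ⟨1 / 1000, by norm_num, fun B L ε hB hL hε _ hT => ?_⟩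
  set T := L ^ 2 * B ^ 2 / ε ^ 2 with hTdef
  have hTε : T * ε ^ 2 = L ^ 2 * B ^ 2 := by rw [hTdef]; field_simp
  rw [show L ^ 2 * B ^ 2 / (128 * ε ^ 2) = T / 128 by rw [hTdef]; field_simp] at hT
  obtain ⟨k, hk, hkT, hTk⟩ := exists_nat_code_parameters (T := T) (by linarith)
  obtain ⟨C, hcode, hcard⟩ := exists_code_exp_le_card hk
  let x : Fin #C → Fin (8 * k) → ℝ := fun i => signVector (C.equivFin.symm i : Fin (8 * k) → Bool)
  have hx : ∀ i, euclNorm (x i) = 1 := fun i => euclNorm_signVector (by omega) _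
  have hsep : ∀ i i', i ≠ i' → 1 / 2 ≤ euclNorm (x i - x i') ^ 2 := fun i i' hii' =>
    half_le_euclNorm_signVector_sub_sq (by omega) <| by
      have := hcode _ (C.equivFin.symm i).2 _ (C.equivFin.symm i').2
        (by simpa [Subtype.ext_iff] using hii')
      omega
  have hmargin : 4 * ε ^ 2 * (8 * k : ℕ) ≤ L ^ 2 * B ^ 2 * (1 / 2) := by
    have := mul_le_mul_of_nonneg_right hkT (sq_nonneg ε)
    rw [hTε] at this
    push_cast
    linarith [show 0 ≤ L ^ 2 * B ^ 2 by positivity]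
  obtain ⟨n, f, hf, hshatter⟩ := shatters_of_separated (by omega) x (by linarith) (by linarith)
    hε hx hsep (by norm_num) hmargin
  refine ⟨8 * k, n, #C, f, hf, ?_, x, fun i => (hx i).le, hshatter⟩
  calc Real.exp (1 / 1000 * L ^ 2 * B ^ 2 / ε ^ 2) ≤ Real.exp (2 * k) := by
        rw [Real.exp_le_exp, mul_assoc, mul_div_assoc, ← hTdef]
        linarith
    _ ≤ #C := hcard
end
end

section
/- For any m ∈ ℕ and 0 < ε ≤ 0.5, there exist dimensions d = m + 1 and n = 2^m + m, a matrix W_0 ∈ ℝ^{n×d} with spectral norm ‖W_0‖ = 2√2·ε, and a function f: ℝⁿ → ℝ which is 1-Lipschitz with respect to the infinity norm (hence also 1-Lipschitz with respect to the Euclidean norm), such that the class {x ↦ f(Wx) : W ∈ ℝ^{n×d}, ‖W − W_0‖_F ≤ √2} shatters m points from the Euclidean unit ball {x ∈ ℝ^d : ‖x‖ ≤ 1} with margin ε. -/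
noncomputable section

open scoped BigOperators

/-- Spectral norm of a matrix (operator norm with respect to Euclidean norms). -/
def specNorm {n d : ℕ} (M : Matrix (Fin n) (Fin d) ℝ) : ℝ :=
  sSup {r : ℝ | ∃ x : Fin d → ℝ, euclNorm x ≤ 1 ∧ r = euclNorm (M.mulVec x)}

/-- Infinity norm of a vector in `ℝ^n`. -/
def supNorm {n : ℕ} (v : Fin n → ℝ) : ℝ := ⨆ i, |v i|

/-! Rows of `W` are indexed by the `2 ^ m` sign patterns `y` and the `m` points `i`. The point
`xᵢ = (√(1 - 2ε²) eᵢ, √2 ε)` is read by `W₀` only on row `i`, with value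
`2√2 ε √(1 - 2ε²) ≥ 2ε`. To realise the pattern `y`, add `√2` at (row `y`, last column): a move of
Frobenius norm `√2` which writes `2ε` into row `y` of `W xᵢ` for every `i`. The readout
`max_{(y, i) : yᵢ = 1} min (u_y, u_i)` is `1`-Lipschitz for the sup-norm and equals `2ε` at `W xᵢ`
if `yᵢ = 1` and at most `0` otherwise, so the class shatters the points with threshold `ε`. -/

open Matrix

theorem supNorm_eq_norm {n : ℕ} (v : Fin n → ℝ) : supNorm v = ‖v‖ := by
  rw [supNorm, ← coe_nnnorm, Pi.nnnorm_def, Finset.sup_univ_eq_ciSup, NNReal.coe_iSup]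
  simp

theorem LipschitzWith.abs_sub_le_supNorm {n : ℕ} {f : (Fin n → ℝ) → ℝ}
    (hf : LipschitzWith 1 f) (u v : Fin n → ℝ) : |f u - f v| ≤ supNorm (u - v) := by
  simpa [supNorm_eq_norm, ← dist_eq_norm, Real.dist_eq] using hf.dist_le_mul u v

theorem LipschitzWith.ciSup {α ι : Type*} [PseudoMetricSpace α] [Finite ι] {K : NNReal}
    {f : ι → α → ℝ} (hf : ∀ i, LipschitzWith K (f i)) :
    LipschitzWith K fun x => ⨆ i, f i x := by
  cases isEmpty_or_nonempty ι
  · simpa using LipschitzWith.const' (α := α) (0 : ℝ)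
  refine LipschitzWith.of_le_add_mul K fun x y => ciSup_le fun i => ?_
  calc f i x ≤ f i y + K * dist x y := (hf i).le_add_mul x y
    _ ≤ (⨆ i, f i y) + K * dist x y := by
      gcongr
      exact le_ciSup (f := fun i => f i y) (Finite.bddAbove_range _) i

theorem specNorm_eq_of_sum_sq {n d : ℕ} {M : Matrix (Fin n) (Fin d) ℝ} {c : ℝ} (hc : 0 ≤ c)
    (hle : ∀ x, ∑ r, (M *ᵥ x) r ^ 2 ≤ c ^ 2 * ∑ j, x j ^ 2) (x₀ : Fin d → ℝ)
    (hx₀ : ∑ j, x₀ j ^ 2 = 1) (hMx₀ : ∑ r, (M *ᵥ x₀) r ^ 2 = c ^ 2) : specNorm M = c := by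
  refine IsGreatest.csSup_eq
    ⟨⟨x₀, by simp [euclNorm, hx₀], by rw [euclNorm, hMx₀, Real.sqrt_sq hc]⟩, ?_⟩
  rintro _ ⟨x, hx, rfl⟩
  calc euclNorm (M *ᵥ x) ≤ √(c ^ 2 * ∑ j, x j ^ 2) := Real.sqrt_le_sqrt (hle x)
    _ = c * euclNorm x := by rw [Real.sqrt_mul (sq_nonneg c), Real.sqrt_sq hc, euclNorm]
    _ ≤ c := mul_le_of_le_one_right hc hx

theorem specNorm_smul_one {n : ℕ} {c : ℝ} (hc : 0 ≤ c) :
    specNorm (c • 1 : Matrix (Fin (n + 1)) (Fin (n + 1)) ℝ) = c := by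
  have hsum (x : Fin (n + 1) → ℝ) :
      ∑ r, ((c • 1 : Matrix (Fin (n + 1)) (Fin (n + 1)) ℝ) *ᵥ x) r ^ 2
        = c ^ 2 * ∑ j, x j ^ 2 := by
    simp [smul_mulVec, mul_pow, Finset.mul_sum]
  have hx₀ : ∑ j, (Pi.single 0 1 : Fin (n + 1) → ℝ) j ^ 2 = 1 := by
    simp [Pi.single_apply, ite_pow]
  exact specNorm_eq_of_sum_sq hc (fun x => (hsum x).le) _ hx₀ (by rw [hsum, hx₀, mul_one])

theorem frobNorm_single {n d : ℕ} (i : Fin n) (j : Fin d) (a : ℝ) :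
    frobNorm (Matrix.single i j a) = |a| := by
  simp [frobNorm, Matrix.single_apply, ite_pow, ite_and, Real.sqrt_sq_eq_abs]

theorem sum_sq_snoc_single {m : ℕ} (i : Fin m) (s t : ℝ) :
    ∑ j, (Fin.snoc (Pi.single i s) t : Fin (m + 1) → ℝ) j ^ 2 = s ^ 2 + t ^ 2 := by
  simp [Fin.sum_univ_castSucc, Pi.single_apply, ite_pow]

theorem shatters_of_fin_zero {X : Type*} {F : Set (X → ℝ)} (hF : F.Nonempty) (x : Fin 0 → X)
    (ε : ℝ) : shatters F x ε :=
  ⟨0, fun _ => ⟨hF.some, hF.some_mem, finZeroElim⟩⟩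

section Construction

variable {m : ℕ}

def patternIndex : (Fin m → Bool) ≃ Fin (2 ^ m) := Fintype.equivFinOfCardEq (by simp)

def patternRow (y : Fin m → Bool) : Fin (2 ^ m + m) := Fin.castAdd m (patternIndex y)

def pointRow (i : Fin m) : Fin (2 ^ m + m) := Fin.natAdd (2 ^ m) i

theorem patternRow_injective : Function.Injective (patternRow (m := m)) :=
  (Fin.castAdd_injective _ _).comp patternIndex.injective

theorem pointRow_injective : Function.Injective (pointRow (m := m)) :=
  Fin.natAdd_injective _ _

theorem pointRow_ne_patternRow (i : Fin m) (y : Fin m → Bool) : pointRow i ≠ patternRow y := by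
  simp only [pointRow, patternRow, ne_eq, Fin.ext_iff, Fin.val_natAdd, Fin.val_castAdd]
  omega

def initMatrix (c : ℝ) : Matrix (Fin (2 ^ m + m)) (Fin (m + 1)) ℝ :=
  Fin.addCases (fun _ => 0) fun i => Pi.single (Fin.castSucc i) c

theorem initMatrix_mulVec_castAdd (c : ℝ) (v : Fin (m + 1) → ℝ) (p : Fin (2 ^ m)) :
    (initMatrix c *ᵥ v) (Fin.castAdd m p) = 0 := by
  simp [initMatrix, mulVec]

theorem initMatrix_mulVec_natAdd (c : ℝ) (v : Fin (m + 1) → ℝ) (i : Fin m) :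
    (initMatrix c *ᵥ v) (Fin.natAdd (2 ^ m) i) = c * v (Fin.castSucc i) := by
  simp only [initMatrix, mulVec, Fin.addCases_right, single_dotProduct]

theorem sum_sq_initMatrix_mulVec (c : ℝ) (v : Fin (m + 1) → ℝ) :
    ∑ r, (initMatrix c *ᵥ v) r ^ 2 = c ^ 2 * ∑ i : Fin m, v (Fin.castSucc i) ^ 2 := by
  simp [Fin.sum_univ_add, initMatrix_mulVec_castAdd, initMatrix_mulVec_natAdd, mul_pow,
    Finset.mul_sum]

theorem specNorm_initMatrix (hm : 0 < m) {c : ℝ} (hc : 0 ≤ c) :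
    specNorm (initMatrix (m := m) c) = c := by
  have hx₀ : ∑ j, (Fin.snoc (Pi.single ⟨0, hm⟩ 1) 0 : Fin (m + 1) → ℝ) j ^ 2 = 1 := by
    simp [sum_sq_snoc_single]
  refine specNorm_eq_of_sum_sq hc (fun v => ?_) _ hx₀ ?_
  · rw [sum_sq_initMatrix_mulVec, Fin.sum_univ_castSucc (fun j => v j ^ 2)]
    gcongr
    exact le_add_of_nonneg_right (sq_nonneg _)
  · rw [sum_sq_initMatrix_mulVec]
    simp [Pi.single_apply, ite_pow]

def perturbedMatrix (c : ℝ) (y : Fin m → Bool) : Matrix (Fin (2 ^ m + m)) (Fin (m + 1)) ℝ :=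
  initMatrix c + Matrix.single (patternRow y) (Fin.last m) √2

theorem frobNorm_perturbedMatrix_sub (c : ℝ) (y : Fin m → Bool) :
    frobNorm (perturbedMatrix c y - initMatrix c) = √2 := by
  rw [perturbedMatrix, add_sub_cancel_left, frobNorm_single, abs_of_nonneg (Real.sqrt_nonneg 2)]

def shatteredPoint (ε : ℝ) (i : Fin m) : Fin (m + 1) → ℝ :=
  Fin.snoc (Pi.single i √(1 - 2 * ε ^ 2)) (√2 * ε)

theorem euclNorm_shatteredPoint {ε : ℝ} (hε : ε ^ 2 ≤ 1 / 2) (i : Fin m) :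
    euclNorm (shatteredPoint ε i) = 1 := by
  rw [euclNorm, shatteredPoint, sum_sq_snoc_single, mul_pow, Real.sq_sqrt (by linarith),
    Real.sq_sqrt zero_le_two]
  simp

theorem initMatrix_mulVec_shatteredPoint (c ε : ℝ) (i : Fin m) :
    initMatrix c *ᵥ shatteredPoint ε i = Pi.single (pointRow i) (c * √(1 - 2 * ε ^ 2)) := by
  ext r
  refine Fin.addCases (fun p => ?_) (fun i' => ?_) r
  · rw [initMatrix_mulVec_castAdd, Pi.single_eq_of_ne]
    simp only [pointRow, ne_eq, Fin.ext_iff, Fin.val_castAdd, Fin.val_natAdd]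
    omega
  · simp [initMatrix_mulVec_natAdd, pointRow, shatteredPoint, Pi.single_apply]

theorem perturbedMatrix_mulVec_shatteredPoint (c ε : ℝ) (y : Fin m → Bool) (i : Fin m) :
    perturbedMatrix c y *ᵥ shatteredPoint ε i
      = Pi.single (pointRow i) (c * √(1 - 2 * ε ^ 2)) + Pi.single (patternRow y) (2 * ε) := by
  rw [perturbedMatrix, add_mulVec, initMatrix_mulVec_shatteredPoint, single_mulVec,
    shatteredPoint, Fin.snoc_last, ← mul_assoc, Real.mul_self_sqrt zero_le_two]
  rfl

def readout (u : Fin (2 ^ m + m) → ℝ) : ℝ :=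
  ⨆ q : (Fin m → Bool) × Fin m, if q.1 q.2 then min (u (patternRow q.1)) (u (pointRow q.2)) else 0

theorem lipschitzWith_readout : LipschitzWith 1 (readout (m := m)) := by
  refine LipschitzWith.ciSup fun q => ?_
  by_cases hq : q.1 q.2
  · have hR := LipschitzWith.eval (α := fun _ : Fin (2 ^ m + m) => ℝ) (patternRow q.1)
    have hP := LipschitzWith.eval (α := fun _ : Fin (2 ^ m + m) => ℝ) (pointRow q.2)
    simpa [hq] using hR.min hP
  · simpa [hq] using LipschitzWith.const' (α := Fin (2 ^ m + m) → ℝ) (0 : ℝ) (K := 1)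

variable {y : Fin m → Bool} {i : Fin m}

theorem readout_single_add_single_le_zero (hyi : y i = false) (a b : ℝ) :
    readout (Pi.single (pointRow i) a + Pi.single (patternRow y) b) ≤ 0 := by
  refine Real.iSup_nonpos fun ⟨y', i'⟩ => ?_
  dsimp only
  split_ifs with hq
  · by_cases hy : y' = y
    · have hi : i' ≠ i := by rintro rfl; simp_all
      refine min_le_of_right_le ?_
      simp [pointRow_injective.eq_iff, hi, pointRow_ne_patternRow]
    · refine min_le_of_left_le ?_
      simp [patternRow_injective.eq_iff, hy, (pointRow_ne_patternRow _ _).symm]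
  · exact le_rfl

theorem le_readout_single_add_single (hyi : y i = true) {a b : ℝ} (hba : b ≤ a) :
    b ≤ readout (Pi.single (pointRow i) a + Pi.single (patternRow y) b) := by
  refine le_trans ?_ (le_ciSup (Finite.bddAbove_range _) (y, i))
  simp [hyi, pointRow_ne_patternRow, hba]

end Construction

/-- Theorem 4 (lower bound with nonzero initialization): for any `m` and `0 < ε ≤ 1/2`,
with `d = m + 1` and `n = 2^m + m`, there exist `W₀` with `‖W₀‖ = 2√2·ε` and a function
`f` which is `1`-Lipschitz with respect to the infinity norm, such that
`{x ↦ f(Wx) : ‖W − W₀‖_F ≤ √2}` shatters `m` points of the Euclidean unit ball with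
margin `ε`. -/
theorem statement5 (m : ℕ) (ε : ℝ) (hε : 0 < ε) (hε' : ε ≤ 0.5) :
    ∃ (W₀ : Matrix (Fin (2 ^ m + m)) (Fin (m + 1)) ℝ)
      (f : (Fin (2 ^ m + m) → ℝ) → ℝ),
      specNorm W₀ = 2 * Real.sqrt 2 * ε ∧
      (∀ u v : Fin (2 ^ m + m) → ℝ, |f u - f v| ≤ supNorm (u - v)) ∧
      ∃ x : Fin m → (Fin (m + 1) → ℝ),
        (∀ i, euclNorm (x i) ≤ 1) ∧
        shatters {g : (Fin (m + 1) → ℝ) → ℝ |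
            ∃ W : Matrix (Fin (2 ^ m + m)) (Fin (m + 1)) ℝ,
              frobNorm (W - W₀) ≤ Real.sqrt 2 ∧
              g = fun v => f (W.mulVec v)} x ε := by
  have hε₂ : ε ≤ 1 / 2 := by norm_num at hε' ⊢; exact hε'
  have hc : 0 ≤ 2 * √2 * ε := by positivity
  obtain rfl | hm := m.eq_zero_or_pos
  -- With no points there are no point rows, so `initMatrix` would vanish.
  · refine ⟨(2 * √2 * ε) • 1, 0, specNorm_smul_one hc,
      (LipschitzWith.const' 0).abs_sub_le_supNorm, finZeroElim, finZeroElim, ?_⟩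
    apply shatters_of_fin_zero
    exact ⟨_, (2 * √2 * ε) • 1, by simp [frobNorm], rfl⟩
  have hmargin : 2 * ε ≤ 2 * √2 * ε * √(1 - 2 * ε ^ 2) := by
    have h : 1 ≤ √2 * √(1 - 2 * ε ^ 2) := by
      rw [← Real.sqrt_mul zero_le_two, Real.one_le_sqrt]
      nlinarith
    nlinarith
  refine ⟨initMatrix (2 * √2 * ε), readout, specNorm_initMatrix hm hc,
    lipschitzWith_readout.abs_sub_le_supNorm, shatteredPoint ε,
    fun i => (euclNorm_shatteredPoint (by nlinarith) i).le, ε,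
    fun y => ⟨_, ⟨perturbedMatrix _ y, (frobNorm_perturbedMatrix_sub _ y).le, rfl⟩,
      fun i => ⟨fun hyi => ?_, fun hyi => ?_⟩⟩⟩
  · simpa [perturbedMatrix_mulVec_shatteredPoint] using
      readout_single_add_single_le_zero hyi _ _
  · have := le_readout_single_add_single hyi hmargin
    simp only [perturbedMatrix_mulVec_shatteredPoint]
    linarith
end
end

section
/- Let σ: ℝ → ℝ be L-Lipschitz and μ-smooth (σ' is μ-Lipschitz), and let b_x > 0. Then the function ψ(x, y, v) = (σ(vx + y) − σ(y))/v, defined on the domain I = [−b_x, b_x] × ℝ × (0, ∞), satisfies the partial derivative bounds |∂ψ/∂x| ≤ L, |∂ψ/∂y| ≤ μ b_x and |∂ψ/∂v| ≤ (μ/2) b_x², and is consequently Lipschitz on I (with respect to the Euclidean norm on ℝ³) with Lipschitz constant at most L + μ b_x + (μ/2) b_x². -/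
/-!
Write `ψ(x, y, v) = (σ(v x + y) − σ(y)) / v`. Its partial derivatives are `σ'(v x + y)`,
`(σ'(v x + y) − σ'(y)) / v` and `−(σ(y) − σ(v x + y) − σ'(v x + y)(y − (v x + y))) / v²`.
The first is bounded by `L`; the second by `μ |x|` since `σ'` is `μ`-Lipschitz; the numerator of
the third is a first-order Taylor remainder of `σ` over a step of length `|v x|`, hence at most
`μ v² x² / 2`. For the Lipschitz bound, move from `(x, y, v)` to `(x', y', v')` one coordinate
at a time; every segment stays in the domain, so the mean value theorem bounds each increment by
the corresponding derivative bound times one coordinate difference, which is at most the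
Euclidean distance.
-/

open Set

noncomputable def scaledIncrement (σ : ℝ → ℝ) (x y v : ℝ) : ℝ := (σ (v * x + y) - σ y) / v

section
variable {σ σ' : ℝ → ℝ} {L μ : ℝ}

theorem abs_sub_sub_mul_le_of_abs_deriv_sub_le (hσ : ∀ s, HasDerivAt σ (σ' s) s)
    (hσ' : ∀ s t, |σ' s - σ' t| ≤ μ * |s - t|) (a b : ℝ) :
    |σ b - σ a - σ' a * (b - a)| ≤ μ / 2 * (b - a) ^ 2 := by
  set h := b - a
  -- Fence `s ↦ σ (a + s h) - σ a - σ' a s h` by `s ↦ μ/2 s² h²` on `[0, 1]`.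
  have hg : ∀ s, HasDerivAt (fun s => σ (a + s * h) - σ a - σ' a * (s * h))
      ((σ' (a + s * h) - σ' a) * h) s := by
    intro s
    have hline : HasDerivAt (fun s => a + s * h) h s := by
      simpa using ((hasDerivAt_id s).mul_const h).const_add a
    exact (((hσ _).comp s hline).sub_const (σ a)).sub
      (((hasDerivAt_id s).mul_const h).const_mul (σ' a)) |>.congr_deriv (by ring)
  have hB : ∀ s, HasDerivAt (fun s => μ / 2 * s ^ 2 * h ^ 2) (μ * s * h ^ 2) s := by
    intro s
    exact (((hasDerivAt_pow 2 s).const_mul (μ / 2)).mul_const (h ^ 2)).congr_deriv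
      (by push_cast; ring)
  have := image_norm_le_of_norm_deriv_right_le_deriv_boundary
    (fun s _ => (hg s).continuousAt.continuousWithinAt) (fun s _ => (hg s).hasDerivWithinAt)
    (by simp) hB (fun s hs => ?_) (right_mem_Icc.2 zero_le_one)
  · simpa [Real.norm_eq_abs, h] using this
  calc ‖(σ' (a + s * h) - σ' a) * h‖ = |σ' (a + s * h) - σ' a| * |h| := by
        rw [Real.norm_eq_abs, abs_mul]
    _ ≤ μ * |a + s * h - a| * |h| := by gcongr; exact hσ' _ _
    _ = μ * s * h ^ 2 := by
        rw [add_sub_cancel_left, abs_mul, abs_of_nonneg hs.1, mul_assoc, mul_assoc, ← sq_abs h]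
        ring

theorem hasDerivAt_scaledIncrement_fst (hσ : ∀ s, HasDerivAt σ (σ' s) s) {v : ℝ} (hv : v ≠ 0)
    (x y : ℝ) : HasDerivAt (fun t => scaledIncrement σ t y v) (σ' (v * x + y)) x := by
  have hline : HasDerivAt (fun t => v * t + y) v x := by
    simpa using ((hasDerivAt_id x).const_mul v).add_const y
  exact ((((hσ _).comp x hline).sub_const (σ y)).div_const v).congr_deriv (by field_simp)

theorem hasDerivAt_scaledIncrement_snd (hσ : ∀ s, HasDerivAt σ (σ' s) s) (x y v : ℝ) :
    HasDerivAt (fun t => scaledIncrement σ x t v) ((σ' (v * x + y) - σ' y) / v) y := by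
  have hshift : HasDerivAt (fun t => v * x + t) 1 y := by
    simpa using (hasDerivAt_id y).const_add (v * x)
  exact ((((hσ _).comp y hshift).sub (hσ y)).div_const v).congr_deriv (by ring)

theorem hasDerivAt_scaledIncrement_thd (hσ : ∀ s, HasDerivAt σ (σ' s) s) {v : ℝ} (hv : v ≠ 0)
    (x y : ℝ) : HasDerivAt (fun t => scaledIncrement σ x y t)
      ((σ' (v * x + y) * x * v - (σ (v * x + y) - σ y)) / v ^ 2) v := by
  have hline : HasDerivAt (fun t => t * x + y) x v := by
    simpa using (hasDerivAt_mul_const x).add_const y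
  exact ((((hσ _).comp v hline).sub_const (σ y)).div (hasDerivAt_id v) hv).congr_deriv
    (by simp)

theorem abs_deriv_scaledIncrement_fst_le (hσ : ∀ s, HasDerivAt σ (σ' s) s)
    (hσL : ∀ s t, |σ s - σ t| ≤ L * |s - t|) {v : ℝ} (hv : v ≠ 0) (x y : ℝ) :
    |deriv (fun t => scaledIncrement σ t y v) x| ≤ L := by
  have hL : 0 ≤ L := (abs_nonneg _).trans (by simpa using hσL 1 0)
  rw [(hasDerivAt_scaledIncrement_fst hσ hv x y).deriv]
  exact (hσ _).le_of_lip' hL (.of_forall fun t => hσL t _)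

theorem abs_deriv_scaledIncrement_snd_le (hσ : ∀ s, HasDerivAt σ (σ' s) s)
    (hσ' : ∀ s t, |σ' s - σ' t| ≤ μ * |s - t|) {v : ℝ} (hv : v ≠ 0) (x y : ℝ) :
    |deriv (fun t => scaledIncrement σ x t v) y| ≤ μ * |x| := by
  rw [(hasDerivAt_scaledIncrement_snd hσ x y v).deriv, abs_div,
    div_le_iff₀ (abs_pos.2 hv)]
  calc |σ' (v * x + y) - σ' y| ≤ μ * |v * x + y - y| := hσ' _ _
    _ = μ * |x| * |v| := by rw [add_sub_cancel_right, abs_mul]; ring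

theorem abs_deriv_scaledIncrement_thd_le (hσ : ∀ s, HasDerivAt σ (σ' s) s)
    (hσ' : ∀ s t, |σ' s - σ' t| ≤ μ * |s - t|) {v : ℝ} (hv : v ≠ 0) (x y : ℝ) :
    |deriv (fun t => scaledIncrement σ x y t) v| ≤ μ / 2 * x ^ 2 := by
  rw [(hasDerivAt_scaledIncrement_thd hσ hv x y).deriv, abs_div, abs_of_nonneg (sq_nonneg v),
    div_le_iff₀ (pow_two_pos_of_ne_zero hv)]
  calc |σ' (v * x + y) * x * v - (σ (v * x + y) - σ y)|
      = |σ y - σ (v * x + y) - σ' (v * x + y) * (y - (v * x + y))| := by ring_nf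
    _ ≤ μ / 2 * (y - (v * x + y)) ^ 2 := abs_sub_sub_mul_le_of_abs_deriv_sub_le hσ hσ' _ _
    _ = μ / 2 * x ^ 2 * v ^ 2 := by ring

theorem abs_scaledIncrement_sub_le (hσ : ∀ s, HasDerivAt σ (σ' s) s)
    (hσL : ∀ s t, |σ s - σ t| ≤ L * |s - t|) (hσ' : ∀ s t, |σ' s - σ' t| ≤ μ * |s - t|)
    {x y v x' y' v' : ℝ} (hv : 0 < v) (hv' : 0 < v') :
    |scaledIncrement σ x y v - scaledIncrement σ x' y' v'|
      ≤ L * |x - x'| + μ * |x'| * |y - y'| + μ / 2 * x' ^ 2 * |v - v'| := by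
  have hΔx : |scaledIncrement σ x y v - scaledIncrement σ x' y v| ≤ L * |x - x'| := by
    simpa only [Real.norm_eq_abs] using convex_univ.norm_image_sub_le_of_norm_deriv_le
      (fun t _ => (hasDerivAt_scaledIncrement_fst hσ hv.ne' t y).differentiableAt)
      (fun t _ => abs_deriv_scaledIncrement_fst_le hσ hσL hv.ne' t y) (mem_univ x') (mem_univ x)
  have hΔy : |scaledIncrement σ x' y v - scaledIncrement σ x' y' v| ≤ μ * |x'| * |y - y'| := by
    simpa only [Real.norm_eq_abs] using convex_univ.norm_image_sub_le_of_norm_deriv_le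
      (fun t _ => (hasDerivAt_scaledIncrement_snd hσ x' t v).differentiableAt)
      (fun t _ => abs_deriv_scaledIncrement_snd_le hσ hσ' hv.ne' x' t) (mem_univ y') (mem_univ y)
  have hΔv : |scaledIncrement σ x' y' v - scaledIncrement σ x' y' v'|
      ≤ μ / 2 * x' ^ 2 * |v - v'| := by
    simpa only [Real.norm_eq_abs] using (convex_Ioi 0).norm_image_sub_le_of_norm_deriv_le
      (fun t ht => (hasDerivAt_scaledIncrement_thd hσ (ne_of_gt ht) x' y').differentiableAt)
      (fun t ht => abs_deriv_scaledIncrement_thd_le hσ hσ' (ne_of_gt ht) x' y') hv' hv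
  calc _ ≤ _ := (abs_sub_le _ (scaledIncrement σ x' y' v) _).trans
        (add_le_add_left (abs_sub_le _ (scaledIncrement σ x' y v) _) _)
    _ ≤ _ := add_le_add (add_le_add hΔx hΔy) hΔv

end

theorem mul_abs_add_mul_abs_add_mul_abs_le {α β γ : ℝ} (hα : 0 ≤ α) (hβ : 0 ≤ β) (hγ : 0 ≤ γ)
    (a b c : ℝ) :
    α * |a| + β * |b| + γ * |c| ≤ (α + β + γ) * Real.sqrt (a ^ 2 + b ^ 2 + c ^ 2) := by
  have ha : |a| ≤ Real.sqrt (a ^ 2 + b ^ 2 + c ^ 2) :=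
    Real.abs_le_sqrt (by nlinarith [sq_nonneg b, sq_nonneg c])
  have hb : |b| ≤ Real.sqrt (a ^ 2 + b ^ 2 + c ^ 2) :=
    Real.abs_le_sqrt (by nlinarith [sq_nonneg a, sq_nonneg c])
  have hc : |c| ≤ Real.sqrt (a ^ 2 + b ^ 2 + c ^ 2) :=
    Real.abs_le_sqrt (by nlinarith [sq_nonneg a, sq_nonneg b])
  calc α * |a| + β * |b| + γ * |c| ≤ α * Real.sqrt (a ^ 2 + b ^ 2 + c ^ 2)
      + β * Real.sqrt (a ^ 2 + b ^ 2 + c ^ 2) + γ * Real.sqrt (a ^ 2 + b ^ 2 + c ^ 2) := by gcongr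
    _ = _ := by ring

theorem statement12_general (σ : ℝ → ℝ) (L μ bx : ℝ)
    (hσL : ∀ s t : ℝ, |σ s - σ t| ≤ L * |s - t|)
    (hσC1 : ContDiff ℝ 1 σ)
    (hσμ : ∀ s t : ℝ, |deriv σ s - deriv σ t| ≤ μ * |s - t|) :
    (∀ x y v : ℝ, |x| ≤ bx → 0 < v →
      |deriv (fun t => (σ (v * t + y) - σ y) / v) x| ≤ L) ∧
    (∀ x y v : ℝ, |x| ≤ bx → 0 < v →
      |deriv (fun t => (σ (v * x + t) - σ t) / v) y| ≤ μ * bx) ∧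
    (∀ x y v : ℝ, |x| ≤ bx → 0 < v →
      |deriv (fun t => (σ (t * x + y) - σ y) / t) v| ≤ μ / 2 * bx ^ 2) ∧
    (∀ x y v x' y' v' : ℝ, |x| ≤ bx → |x'| ≤ bx → 0 < v → 0 < v' →
      |(σ (v * x + y) - σ y) / v - (σ (v' * x' + y') - σ y') / v'|
        ≤ (L + μ * bx + μ / 2 * bx ^ 2) *
            Real.sqrt ((x - x') ^ 2 + (y - y') ^ 2 + (v - v') ^ 2)) := by
  have hσ : ∀ s, HasDerivAt σ (deriv σ s) s := fun s =>
    ((hσC1.differentiable one_ne_zero) s).hasDerivAt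
  have hL : 0 ≤ L := (abs_nonneg _).trans (by simpa using hσL 1 0)
  have hμ : 0 ≤ μ := (abs_nonneg _).trans (by simpa using hσμ 1 0)
  have sq_le_sq_bx {x : ℝ} (hx : |x| ≤ bx) : x ^ 2 ≤ bx ^ 2 :=
    sq_le_sq' (abs_le.1 hx).1 (abs_le.1 hx).2
  refine ⟨fun x y v _ hv => abs_deriv_scaledIncrement_fst_le hσ hσL hv.ne' x y,
    fun x y v hx hv => ?_, fun x y v hx hv => ?_, fun x y v x' y' v' hx hx' hv hv' => ?_⟩
  · exact (abs_deriv_scaledIncrement_snd_le hσ hσμ hv.ne' x y).trans (by gcongr)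
  · exact (abs_deriv_scaledIncrement_thd_le hσ hσμ hv.ne' x y).trans
      (by gcongr μ / 2 * ?_; exact sq_le_sq_bx hx)
  · have hbx : 0 ≤ bx := (abs_nonneg x).trans hx
    calc _ ≤ L * |x - x'| + μ * |x'| * |y - y'| + μ / 2 * x' ^ 2 * |v - v'| :=
          abs_scaledIncrement_sub_le hσ hσL hσμ hv hv'
      _ ≤ L * |x - x'| + μ * bx * |y - y'| + μ / 2 * bx ^ 2 * |v - v'| := by
          gcongr L * |x - x'| + μ * ?_ * |y - y'| + μ / 2 * ?_ * |v - v'|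
          exact sq_le_sq_bx hx'
      _ ≤ _ := mul_abs_add_mul_abs_add_mul_abs_le hL (by positivity) (by positivity) _ _ _

/-- Lemma: if `σ : ℝ → ℝ` is `L`-Lipschitz and `μ`-smooth, then the function
`ψ(x, y, v) = (σ(vx + y) − σ(y))/v` on `[−b_x, b_x] × ℝ × (0, ∞)` has partial
derivatives bounded by `L`, `μ b_x` and `(μ/2) b_x²` respectively, and is Lipschitz
on this domain (with respect to the Euclidean norm on `ℝ³`) with constant at most
`L + μ b_x + (μ/2) b_x²`. -/
theorem statement12 (σ : ℝ → ℝ) (L μ bx : ℝ) (hbx : 0 < bx)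
    (hσL : ∀ s t : ℝ, |σ s - σ t| ≤ L * |s - t|)
    (hσC1 : ContDiff ℝ 1 σ)
    (hσμ : ∀ s t : ℝ, |deriv σ s - deriv σ t| ≤ μ * |s - t|) :
    (∀ x y v : ℝ, |x| ≤ bx → 0 < v →
      |deriv (fun t => (σ (v * t + y) - σ y) / v) x| ≤ L) ∧
    (∀ x y v : ℝ, |x| ≤ bx → 0 < v →
      |deriv (fun t => (σ (v * x + t) - σ t) / v) y| ≤ μ * bx) ∧
    (∀ x y v : ℝ, |x| ≤ bx → 0 < v →
      |deriv (fun t => (σ (t * x + y) - σ y) / t) v| ≤ μ / 2 * bx ^ 2) ∧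
    (∀ x y v x' y' v' : ℝ, |x| ≤ bx → |x'| ≤ bx → 0 < v → 0 < v' →
      |(σ (v * x + y) - σ y) / v - (σ (v' * x' + y') - σ y') / v'|
        ≤ (L + μ * bx + μ / 2 * bx ^ 2) *
            Real.sqrt ((x - x') ^ 2 + (y - y') ^ 2 + (v - v') ^ 2)) :=
  statement12_general σ L μ bx hσL hσC1 hσμ
end
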